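/- Let T be a tadpole graph consisting of a cycle on i ≥ 3 vertices together with an attached path on j ≥ 1 further vertices (so T has i cycle edges and j stem edges), where every edge has weight 1. Then for every start vertex s, the minimum number of edge traversals of a closed walk from s to s that visits every vertex of T equals i + 2j. -/

import Mathlib

/-!
A closed walk through every vertex crosses each bridge at least twice: cut at the two endpoints
of the bridge, it splits into two walks between them, and each of these must use the bridge.
A tadpole has as many edges as vertices, so deleting any cycle edge leaves a spanning tree.
A spanning closed walk that misses a cycle edge lives in that tree and crosses each of its
`i + j - 1` edges twice, which costs at least `i + 2j` as `i ≥ 2`; one that uses every cycle edge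
costs at least `i + 2j` outright. Conversely, going once around the cycle and splicing in a
back-and-forth detour for each vertex not yet reached gives a spanning closed walk of length
`i + 2 (n - i) = i + 2j`.
-/

/-- A tadpole graph: a finite connected simple graph with exactly one vertex of
degree 1, exactly one vertex of degree 3, and all other vertices of degree 2. -/
def IsTadpole {V : Type*} [Fintype V] (G : SimpleGraph V) [DecidableRel G.Adj] : Prop :=
  G.Connected ∧ ∃ x y : V, x ≠ y ∧ G.degree x = 1 ∧ G.degree y = 3 ∧
    ∀ v : V, v ≠ x → v ≠ y → G.degree v = 2

open Finset

theorem List.sum_count_le_length {α : Type*} [DecidableEq α] (l : List α) (s : Finset α) :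
    ∑ a ∈ s, l.count a ≤ l.length := by
  calc ∑ a ∈ s, l.count a ≤ ∑ a ∈ s ∪ l.toFinset, l.count a :=
        sum_le_sum_of_subset subset_union_left
    _ = l.length := by
        simpa using Multiset.sum_count_eq_card (s := s ∪ l.toFinset) (m := (l : Multiset α))
          (by simp +contextual)

namespace SimpleGraph

variable {V : Type*} {G : SimpleGraph V}

namespace Walk

theorem two_le_count_edges_of_isBridge [DecidableEq V] {u a b : V} {w : G.Walk u u}
    (ha : a ∈ w.support) (hb : b ∈ w.support) (h : G.IsBridge s(a, b)) :
    2 ≤ w.edges.count s(a, b) := by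
  set c := w.rotate a ha
  have hb' : b ∈ c.support := (w.mem_support_rotate_iff a ha).2 hb
  have hab := isBridge_iff_forall_walk_mem_edges.1 h (c.takeUntil b hb')
  have hba := isBridge_iff_forall_walk_mem_edges.1 h (c.dropUntil b hb').reverse
  rw [edges_reverse, List.mem_reverse] at hba
  calc 2 ≤ (c.takeUntil b hb').edges.count s(a, b) + (c.dropUntil b hb').edges.count s(a, b) :=
        Nat.add_le_add (List.count_pos_iff.2 hab) (List.count_pos_iff.2 hba)
    _ = c.edges.count s(a, b) := by
        rw [← List.count_append, ← edges_append, take_spec]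
    _ = w.edges.count s(a, b) := (w.rotate_edges a ha).perm.count_eq _

theorem two_mul_card_add_card_le_length [DecidableEq V] {u : V} {w : G.Walk u u}
    (hw : ∀ x, x ∈ w.support) {B N : Finset (Sym2 V)} (hBN : Disjoint B N)
    (hB : ∀ e ∈ B, G.IsBridge e) (hN : ∀ e ∈ N, e ∈ w.edges) :
    2 * #B + #N ≤ w.length := by
  have hB2 : ∀ e ∈ B, 2 ≤ w.edges.count e := by
    intro e he
    induction e using Sym2.ind with
    | _ a b => exact two_le_count_edges_of_isBridge (hw a) (hw b) (hB _ he)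
  calc 2 * #B + #N = ∑ e ∈ B, 2 + ∑ e ∈ N, 1 := by simp [mul_comm]
    _ ≤ ∑ e ∈ B, w.edges.count e + ∑ e ∈ N, w.edges.count e :=
        add_le_add (sum_le_sum hB2) (sum_le_sum fun e he => List.count_pos_iff.2 (hN e he))
    _ = ∑ e ∈ B ∪ N, w.edges.count e := (sum_union hBN).symm
    _ ≤ w.length := w.length_edges ▸ w.edges.sum_count_le_length _

theorem IsCycle.length_le_card_support [DecidableEq V] {u : V} {c : G.Walk u u}
    (hc : c.IsCycle) : c.length ≤ #c.support.toFinset := by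
  calc c.length = #c.support.tail.toFinset := by
        rw [List.toFinset_card_of_nodup hc.support_nodup, List.length_tail, length_support]
        rfl
    _ ≤ #c.support.toFinset := card_le_card fun x hx => by
        simpa using List.mem_of_mem_tail (List.mem_toFinset.1 hx)

end Walk

theorem Connected.exists_walk_forall_mem_support [Fintype V] [DecidableEq V] (hG : G.Connected)
    {u v : V} (p : G.Walk u v) :
    ∃ w : G.Walk u v, (∀ x, x ∈ w.support) ∧
      w.length + 2 * #p.support.toFinset ≤ p.length + 2 * Fintype.card V := by
  by_cases hp : ∀ x, x ∈ p.support
  · exact ⟨p, hp, by have := card_le_univ p.support.toFinset; omega⟩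
  obtain ⟨x, hx⟩ := not_forall.1 hp
  obtain ⟨d, -, ha, hb⟩ := (hG.preconnected u x).some.exists_boundary_dart {y | y ∈ p.support}
    p.start_mem_support hx
  obtain ⟨q, hq, hlen⟩ : ∃ q : G.Walk u v,
      insert d.snd p.support.toFinset ⊆ q.support.toFinset ∧ q.length = p.length + 2 := by
    refine ⟨(p.takeUntil d.fst ha).append
      (.cons d.adj (.cons d.adj.symm (p.dropUntil d.fst ha))), fun y hy => ?_, ?_⟩
    · rw [mem_insert, List.mem_toFinset, ← p.take_spec ha, Walk.mem_support_append_iff] at hy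
      simp only [List.mem_toFinset, Walk.mem_support_append_iff, Walk.support_cons,
        List.mem_cons]
      grind
    · have := congrArg Walk.length (p.take_spec ha)
      simp only [Walk.length_append, Walk.length_cons] at this ⊢
      omega
  have hcard : #p.support.toFinset + 1 ≤ #q.support.toFinset := by
    simpa [card_insert_of_notMem (show d.snd ∉ p.support.toFinset by simpa using hb)]
      using card_le_card hq
  obtain ⟨w, hw, hwlen⟩ := hG.exists_walk_forall_mem_support q
  exact ⟨w, hw, by omega⟩
termination_by Fintype.card V - #p.support.toFinset
decreasing_by
  have := card_le_univ q.support.toFinset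
  omega

theorem ncard_sep_edgeSet [Fintype G.edgeSet] (P : Sym2 V → Prop) [DecidablePred P] :
    {e ∈ G.edgeSet | P e}.ncard = #{e ∈ G.edgeFinset | P e} := by
  rw [← Set.ncard_coe_finset, coe_filter]
  simp

section Unicyclic

variable [Fintype V] [DecidableRel G.Adj]

theorem Connected.isTree_deleteEdges_of_not_isBridge (hG : G.Connected)
    (hcard : #G.edgeFinset = Fintype.card V) {e : Sym2 V} (he : e ∈ G.edgeSet)
    (hnb : ¬G.IsBridge e) : (G.deleteEdges {e}).IsTree := by
  obtain ⟨a, b⟩ := e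
  refine isTree_iff_connected_and_card.2 ⟨hG.connected_delete_edge_of_not_isBridge hnb, ?_⟩
  rw [edgeSet_deleteEdges, Nat.card_coe_set_eq, Set.ncard_sdiff_singleton_add_one he,
    Nat.card_eq_fintype_card, ← hcard, ← coe_edgeFinset, Set.ncard_coe_finset]

variable [DecidableEq V]

theorem Connected.mem_edges_of_isCycle_of_not_isBridge (hG : G.Connected)
    (hcard : #G.edgeFinset = Fintype.card V) {e : Sym2 V} (he : e ∈ G.edgeSet)
    (hnb : ¬G.IsBridge e) {u : V} {c : G.Walk u u} (hc : c.IsCycle) : e ∈ c.edges := by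
  by_contra hce
  exact (hG.isTree_deleteEdges_of_not_isBridge hcard he hnb).isAcyclic _
    (hc.transfer _ : (c.toDeleteEdge e hce).IsCycle)

theorem Connected.ncard_add_two_mul_ncard_le_length (hG : G.Connected)
    (hcard : #G.edgeFinset = Fintype.card V) (hN : 2 ≤ {e ∈ G.edgeSet | ¬G.IsBridge e}.ncard)
    {u : V} {w : G.Walk u u} (hw : ∀ x, x ∈ w.support) :
    {e ∈ G.edgeSet | ¬G.IsBridge e}.ncard + 2 * {e ∈ G.edgeSet | G.IsBridge e}.ncard
      ≤ w.length := by
  classical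
  rw [ncard_sep_edgeSet, ncard_sep_edgeSet] at *
  have hsplit := card_filter_add_card_filter_not (s := G.edgeFinset) (G.IsBridge ·)
  by_cases hall : ∀ e ∈ G.edgeSet, ¬G.IsBridge e → e ∈ w.edges
  · have hcross := w.two_mul_card_add_card_le_length hw (B := {e ∈ G.edgeFinset | G.IsBridge e})
      (N := {e ∈ G.edgeFinset | ¬G.IsBridge e}) (disjoint_filter_filter_not _ _ _)
      (fun e he => (mem_filter.1 he).2)
      (fun e he => hall e (mem_edgeFinset.1 (mem_filter.1 he).1) (mem_filter.1 he).2)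
    omega
  push Not at hall
  obtain ⟨e, he, hnb, hew⟩ := hall
  have hT := hG.isTree_deleteEdges_of_not_isBridge hcard he hnb
  have hcross := (w.toDeleteEdge e hew).two_mul_card_add_card_le_length (by simpa using hw)
    (disjoint_empty_right _)
    (fun f hf => isAcyclic_iff_forall_isBridge.1 hT.isAcyclic (mem_edgeFinset.1 hf))
    (N := ∅) (by simp)
  rw [card_empty, add_zero, Walk.length_transfer] at hcross
  have := hT.card_edgeFinset
  omega

theorem Connected.exists_walk_forall_mem_support_length_le (hG : G.Connected)
    (hcard : #G.edgeFinset = Fintype.card V) (s : V) :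
    ∃ w : G.Walk s s, (∀ x, x ∈ w.support) ∧
      w.length + {e ∈ G.edgeSet | ¬G.IsBridge e}.ncard ≤ 2 * Fintype.card V := by
  have hcyc : ¬G.IsAcyclic := fun hac => by
    have := IsTree.card_edgeFinset ⟨hG, hac⟩
    omega
  obtain ⟨v, c, hc⟩ : ∃ (v : V) (c : G.Walk v v), c.IsCycle := by
    simpa [IsAcyclic] using hcyc
  have hN : {e ∈ G.edgeSet | ¬G.IsBridge e}.ncard ≤ c.length := by
    calc {e ∈ G.edgeSet | ¬G.IsBridge e}.ncard ≤ (c.edges.toFinset : Set (Sym2 V)).ncard :=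
          Set.ncard_le_ncard (fun e ⟨he, hnb⟩ => by
            simpa using hG.mem_edges_of_isCycle_of_not_isBridge hcard he hnb hc)
      _ ≤ c.length := by
          rw [Set.ncard_coe_finset, ← c.length_edges]
          exact List.toFinset_card_le _
  obtain ⟨w, hw, hwlen⟩ := hG.exists_walk_forall_mem_support c
  have := hc.length_le_card_support
  exact ⟨w.rotate s (hw s), by simpa using hw, by simp only [Walk.length_rotate]; omega⟩

end Unicyclic

end SimpleGraph

open SimpleGraph

theorem IsTadpole.card_edgeFinset {V : Type*} [Fintype V] [DecidableEq V] {G : SimpleGraph V}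
    [DecidableRel G.Adj] (h : IsTadpole G) : #G.edgeFinset = Fintype.card V := by
  obtain ⟨-, x, y, hxy, hx, hy, hdeg⟩ := h
  -- the excess degrees `deg v - 2` are `-1` at `x`, `1` at `y` and `0` elsewhere
  have hexcess : ∑ v, ((G.degree v : ℤ) - 2) = 0 := by
    rw [sum_eq_add x y hxy (fun v _ hv => by simp [hdeg v hv.1 hv.2]) (by simp) (by simp), hx, hy]
    norm_num
  have := G.sum_degrees_eq_twice_card_edges
  rw [sum_sub_distrib, ← Nat.cast_sum, this, sum_const, card_univ, nsmul_eq_mul] at hexcess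
  push_cast at hexcess
  omega

theorem stmt_14_general {V : Type*} [Fintype V] [DecidableEq V] (G : SimpleGraph V)
    [DecidableRel G.Adj] (htad : IsTadpole G)
    (i j : ℕ) (hi : 3 ≤ i)
    (hcyc : {e ∈ G.edgeSet | ¬ G.IsBridge e}.ncard = i)
    (hstem : {e ∈ G.edgeSet | G.IsBridge e}.ncard = j)
    (s : V) :
    IsLeast {n : ℕ | ∃ w : G.Walk s s, (∀ v : V, v ∈ w.support) ∧ w.length = n}
      (i + 2 * j) := by
  classical
  have hconn := htad.1
  have hcard := htad.card_edgeFinset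
  have hij : i + j = Fintype.card V := by
    rw [← hcyc, ← hstem, ncard_sep_edgeSet, ncard_sep_edgeSet, ← hcard]
    exact (add_comm _ _).trans (card_filter_add_card_filter_not _)
  have hlower {w : G.Walk s s} (hw : ∀ v, v ∈ w.support) : i + 2 * j ≤ w.length :=
    hcyc ▸ hstem ▸ hconn.ncard_add_two_mul_ncard_le_length hcard (by omega) hw
  obtain ⟨w, hw, hwlen⟩ := hconn.exists_walk_forall_mem_support_length_le hcard s
  refine ⟨⟨w, hw, ?_⟩, fun n ⟨w', hw', hn⟩ => hn ▸ hlower hw'⟩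
  have := hlower hw
  omega

/-- For a tadpole graph with `i ≥ 3` cycle edges (the non-bridges) and `j ≥ 1`
stem edges (the bridges), all of unit weight, the minimum number of edge
traversals of a closed spanning walk from any start vertex `s` equals
`i + 2 * j`. -/
theorem stmt_14 {V : Type*} [Fintype V] [DecidableEq V] (G : SimpleGraph V)
    [DecidableRel G.Adj] (htad : IsTadpole G)
    (i j : ℕ) (hi : 3 ≤ i) (hj : 1 ≤ j)
    (hcyc : {e ∈ G.edgeSet | ¬ G.IsBridge e}.ncard = i)
    (hstem : {e ∈ G.edgeSet | G.IsBridge e}.ncard = j)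
    (s : V) :
    IsLeast {n : ℕ | ∃ w : G.Walk s s, (∀ v : V, v ∈ w.support) ∧ w.length = n}
      (i + 2 * j) :=
  stmt_14_general G htad i j hi hcyc hstem s
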